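/- Let A be positive semidefinite and T an operator admitting an A-adjoint. Then dw_A(T)² ≤ ‖ |T|_A² + (|T|_A²)^♯ |T|_A² ‖_A, where |T|_A² = T^♯T and S^♯ denotes the A-adjoint of S. -/

import Mathlib

noncomputable section

namespace DW

variable {H : Type*} [NormedAddCommGroup H] [InnerProductSpace ℂ H]

/-- The semi-inner product induced by `A`: `⟨x,y⟩_A = ⟨Ax, y⟩`. -/
def innA (A : H →L[ℂ] H) (x y : H) : ℂ := inner ℂ (A x) y

/-- The seminorm induced by `A`. -/
def normA (A : H →L[ℂ] H) (x : H) : ℝ := Real.sqrt (innA A x x).re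

/-- `T` is `A`-bounded. -/
def IsABounded (A T : H →L[ℂ] H) : Prop := ∃ c > 0, ∀ x, normA A (T x) ≤ c * normA A x

/-- `S` is an `A`-adjoint of `T`. -/
def IsAAdjointPair (A T S : H →L[ℂ] H) : Prop := ∀ x y, innA A (T x) y = innA A x (S y)

/-- The `A`-operator seminorm. -/
def opNormA (A T : H →L[ℂ] H) : ℝ := sSup {r | ∃ x, normA A x = 1 ∧ r = normA A (T x)}

/-- The `A`-minimum modulus. -/
def mA (A T : H →L[ℂ] H) : ℝ := sInf {r | ∃ x, normA A x = 1 ∧ r = normA A (T x)}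

/-- The `A`-numerical radius. -/
def wA (A T : H →L[ℂ] H) : ℝ :=
  sSup {r | ∃ x, normA A x = 1 ∧ r = ‖innA A (T x) x‖}

/-- The `A`-Crawford number. -/
def cA (A T : H →L[ℂ] H) : ℝ :=
  sInf {r | ∃ x, normA A x = 1 ∧ r = ‖innA A (T x) x‖}

/-- The `A`-Davis-Wielandt radius. -/
def dwA (A T : H →L[ℂ] H) : ℝ :=
  sSup {r | ∃ x, normA A x = 1 ∧
    r = Real.sqrt (‖innA A (T x) x‖ ^ 2 + normA A (T x) ^ 4)}

/-- The semi-inner product on `H ⊕ H` induced by `𝔸 = diag(A,A)`. -/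
def innA2 (A : H →L[ℂ] H) (z w : H × H) : ℂ := innA A z.1 w.1 + innA A z.2 w.2

/-- The seminorm on `H ⊕ H` induced by `𝔸 = diag(A,A)`. -/
def normA2 (A : H →L[ℂ] H) (z : H × H) : ℝ := Real.sqrt (innA2 A z z).re

/-- The `𝔸`-numerical radius on `H ⊕ H`, `𝔸 = diag(A,A)`. -/
def wA2 (A : H →L[ℂ] H) (T : H × H →L[ℂ] H × H) : ℝ :=
  sSup {r | ∃ z, normA2 A z = 1 ∧ r = ‖innA2 A (T z) z‖}

/-- The `𝔸`-Davis-Wielandt radius on `H ⊕ H`, `𝔸 = diag(A,A)`. -/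
def dwA2 (A : H →L[ℂ] H) (T : H × H →L[ℂ] H × H) : ℝ :=
  sSup {r | ∃ z, normA2 A z = 1 ∧
    r = Real.sqrt (‖innA2 A (T z) z‖ ^ 2 + normA2 A (T z) ^ 4)}

/-- The block operator `[[0, X], [Y, 0]]` on `H ⊕ H`. -/
def offDiag (X Y : H →L[ℂ] H) : H × H →L[ℂ] H × H :=
  (X.comp (ContinuousLinearMap.snd ℂ H H)).prod (Y.comp (ContinuousLinearMap.fst ℂ H H))

end DW

open DW


/-!
On an `A`-unit vector `x`, Cauchy–Schwarz for `⟨·,·⟩_A` gives `|⟨Tx,x⟩_A|² ≤ ‖Tx‖_A²`, and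
`‖Tx‖_A² = ⟨x, T^♯Tx⟩_A ≤ ‖T^♯Tx‖_A`. Hence, with `R = |T|_A² + (|T|_A²)^♯ |T|_A²`,
`|⟨Tx,x⟩_A|² + ‖Tx‖_A⁴ ≤ ‖Tx‖_A² + ‖|T|_A² x‖_A² = Re ⟨x, Rx⟩_A ≤ ‖Rx‖_A`.

The supremum defining `‖R‖_A` is finite because an operator `P` with an `A`-adjoint `Q` is
`A`-bounded: `‖Px‖_A² ≤ ‖QPx‖_A`, and an `A`-selfadjoint `M` satisfies
`‖Mx‖_A^(2^n) ≤ ‖M^(2^n) x‖_A ≤ ‖A^(1/2)‖ ‖M‖^(2^n) ‖x‖`, so `‖Mx‖_A ≤ ‖M‖` on taking roots.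
-/

open scoped InnerProductSpace ComplexConjugate

lemma le_of_forall_pow_two_pow_le_mul {t m D : ℝ} (hm : 0 ≤ m)
    (h : ∀ n : ℕ, t ^ 2 ^ n ≤ m ^ 2 ^ n * D) : t ≤ m := by
  by_contra! hmt
  obtain rfl | hm := hm.eq_or_lt
  · simpa [hmt.not_ge] using h 0
  have hr : 1 < t / m := (one_lt_div hm).mpr hmt
  obtain ⟨n, hn⟩ := pow_unbounded_of_one_lt D hr
  have hD : (t / m) ^ 2 ^ n ≤ D := by
    rw [div_pow, div_le_iff₀ (pow_pos hm _), mul_comm]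
    exact h n
  linarith [pow_le_pow_right₀ hr.le (Nat.lt_two_pow_self (n := n)).le]

namespace DW

variable {H : Type*} [NormedAddCommGroup H] [InnerProductSpace ℂ H] {A : H →L[ℂ] H}

lemma normA_nonneg (x : H) : 0 ≤ normA A x := Real.sqrt_nonneg _

lemma innA_add_right (x y z : H) : innA A x (y + z) = innA A x y + innA A x z :=
  inner_add_right _ _ _

lemma innA_conj_symm (hA : A.IsPositive) (x y : H) : conj (innA A y x) = innA A x y :=
  hA.isSymmetric.conj_inner_sym y x

lemma innA_self (hA : A.IsPositive) (x : H) : innA A x x = (normA A x ^ 2 : ℝ) := by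
  have hre : 0 ≤ (innA A x x).re := hA.re_inner_nonneg_left x
  rw [normA, Real.sq_sqrt hre]
  exact (hA.isSymmetric.coe_re_inner_apply_self x).symm

section Sqrt

variable [CompleteSpace H]

lemma innA_eq_inner_sqrt (hA : A.IsPositive) (x y : H) :
    innA A x y = ⟪CFC.sqrt A x, CFC.sqrt A y⟫_ℂ := by
  have hA₀ : 0 ≤ A := (ContinuousLinearMap.nonneg_iff_isPositive A).mpr hA
  have hsqrt : (CFC.sqrt A).IsPositive :=
    (ContinuousLinearMap.nonneg_iff_isPositive _).mp (CFC.sqrt_nonneg A)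
  calc innA A x y = ⟪(CFC.sqrt A * CFC.sqrt A) x, y⟫_ℂ := by rw [CFC.sqrt_mul_sqrt_self A hA₀]; rfl
    _ = ⟪CFC.sqrt A x, CFC.sqrt A y⟫_ℂ := hsqrt.inner_left_eq_inner_right _ _

lemma normA_eq_norm_sqrt (hA : A.IsPositive) (x : H) : normA A x = ‖CFC.sqrt A x‖ := by
  rw [normA, innA_eq_inner_sqrt hA]
  exact (norm_eq_sqrt_re_inner (𝕜 := ℂ) _).symm

lemma norm_innA_le (hA : A.IsPositive) (x y : H) : ‖innA A x y‖ ≤ normA A x * normA A y := by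
  rw [innA_eq_inner_sqrt hA, normA_eq_norm_sqrt hA, normA_eq_norm_sqrt hA]
  exact norm_inner_le_norm _ _

lemma re_innA_le_normA (hA : A.IsPositive) {x : H} (hx : normA A x = 1) (y : H) :
    (innA A x y).re ≤ normA A y :=
  (Complex.re_le_norm _).trans <| by simpa [hx] using norm_innA_le hA x y

lemma normA_le_norm_sqrt_mul_norm (hA : A.IsPositive) (x : H) :
    normA A x ≤ ‖CFC.sqrt A‖ * ‖x‖ :=
  normA_eq_norm_sqrt hA x ▸ (CFC.sqrt A).le_opNorm x

end Sqrt

namespace IsAAdjointPair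

variable {P Q M : H →L[ℂ] H}

lemma symm (hA : A.IsPositive) (h : IsAAdjointPair A P Q) : IsAAdjointPair A Q P := fun x y => by
  rw [← innA_conj_symm hA, ← h, innA_conj_symm hA]

lemma add {P' Q' : H →L[ℂ] H} (hP : IsAAdjointPair A P Q) (hP' : IsAAdjointPair A P' Q') :
    IsAAdjointPair A (P + P') (Q + Q') := fun x y => by
  simp only [innA, add_apply, map_add, inner_add_left, inner_add_right]
  exact congrArg₂ (· + ·) (hP x y) (hP' x y)

lemma comp {P' Q' : H →L[ℂ] H} (hP : IsAAdjointPair A P Q) (hP' : IsAAdjointPair A P' Q') :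
    IsAAdjointPair A (P.comp P') (Q'.comp Q) := fun x y => by
  rw [ContinuousLinearMap.comp_apply, ContinuousLinearMap.comp_apply, hP, hP']

lemma pow (hM : IsAAdjointPair A M M) (k : ℕ) : IsAAdjointPair A (M ^ k) (M ^ k) := by
  induction k with
  | zero => exact fun x y => rfl
  | succ k ih => rw [pow_succ]; nth_rw 2 [pow_mul_comm']; exact ih.comp hM

lemma innA_apply_self (hA : A.IsPositive) (h : IsAAdjointPair A P Q) (x : H) :
    innA A x (Q (P x)) = (normA A (P x) ^ 2 : ℝ) := by
  rw [← h, innA_self hA]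

variable [CompleteSpace H]

lemma normA_sq_le (hA : A.IsPositive) (h : IsAAdjointPair A P Q) {x : H} (hx : normA A x = 1) :
    normA A (P x) ^ 2 ≤ normA A (Q (P x)) := by
  have hre := re_innA_le_normA hA hx (Q (P x))
  rwa [h.innA_apply_self hA, Complex.ofReal_re] at hre

lemma normA_pow_two_pow_le (hA : A.IsPositive) (hM : IsAAdjointPair A M M) {x : H}
    (hx : normA A x = 1) (n : ℕ) : normA A (M x) ^ 2 ^ n ≤ normA A ((M ^ 2 ^ n) x) := by
  induction n with
  | zero => simp
  | succ n ih =>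
    calc normA A (M x) ^ 2 ^ (n + 1) = (normA A (M x) ^ 2 ^ n) ^ 2 := by rw [pow_succ, pow_mul]
      _ ≤ normA A ((M ^ 2 ^ n) x) ^ 2 := by gcongr; exact pow_nonneg (normA_nonneg _) _
      _ ≤ normA A ((M ^ 2 ^ n) ((M ^ 2 ^ n) x)) := (hM.pow _).normA_sq_le hA hx
      _ = normA A ((M ^ 2 ^ (n + 1)) x) := by rw [pow_succ, pow_mul, sq]; rfl

lemma normA_apply_le_norm (hA : A.IsPositive) (hM : IsAAdjointPair A M M) {x : H}
    (hx : normA A x = 1) : normA A (M x) ≤ ‖M‖ := by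
  refine le_of_forall_pow_two_pow_le_mul (D := ‖CFC.sqrt A‖ * ‖x‖) (norm_nonneg M) fun n => ?_
  calc normA A (M x) ^ 2 ^ n ≤ normA A ((M ^ 2 ^ n) x) := hM.normA_pow_two_pow_le hA hx n
    _ ≤ ‖CFC.sqrt A‖ * (‖M ^ 2 ^ n‖ * ‖x‖) := by
      grw [normA_le_norm_sqrt_mul_norm hA, (M ^ 2 ^ n).le_opNorm x]
    _ ≤ ‖CFC.sqrt A‖ * (‖M‖ ^ 2 ^ n * ‖x‖) := by grw [norm_pow_le' M (by positivity)]
    _ = ‖M‖ ^ 2 ^ n * (‖CFC.sqrt A‖ * ‖x‖) := by ring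

lemma bddAbove_normA (hA : A.IsPositive) (h : IsAAdjointPair A P Q) :
    BddAbove {r | ∃ x, normA A x = 1 ∧ r = normA A (P x)} := by
  refine ⟨√‖Q.comp P‖, ?_⟩
  rintro r ⟨x, hx, rfl⟩
  have hQP : IsAAdjointPair A (Q.comp P) (Q.comp P) := (h.symm hA).comp h
  exact Real.le_sqrt_of_sq_le <|
    (h.normA_sq_le hA hx).trans (hQP.normA_apply_le_norm hA hx)

lemma normA_le_opNormA (hA : A.IsPositive) (h : IsAAdjointPair A P Q) {x : H}
    (hx : normA A x = 1) : normA A (P x) ≤ opNormA A P :=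
  le_csSup (h.bddAbove_normA hA) ⟨x, hx, rfl⟩

end IsAAdjointPair

lemma opNormA_nonneg (P : H →L[ℂ] H) : 0 ≤ opNormA A P :=
  Real.sSup_nonneg <| by rintro r ⟨x, -, rfl⟩; exact Real.sqrt_nonneg _

lemma dwA_sq_le {T : H →L[ℂ] H} {c : ℝ} (hc : 0 ≤ c)
    (h : ∀ x, normA A x = 1 → ‖innA A (T x) x‖ ^ 2 + normA A (T x) ^ 4 ≤ c) :
    dwA A T ^ 2 ≤ c := by
  have hdw : dwA A T ≤ √c :=
    Real.sSup_le (by rintro r ⟨x, hx, rfl⟩; exact Real.sqrt_le_sqrt (h x hx)) (Real.sqrt_nonneg c)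
  have hdw₀ : 0 ≤ dwA A T :=
    Real.sSup_nonneg <| by rintro r ⟨x, -, rfl⟩; exact Real.sqrt_nonneg _
  calc dwA A T ^ 2 ≤ √c ^ 2 := by gcongr
    _ = c := Real.sq_sqrt hc

end DW

variable {H : Type*} [NormedAddCommGroup H] [InnerProductSpace ℂ H] [CompleteSpace H]

theorem stmt11 (A T T' S' : H →L[ℂ] H) (hA : A.IsPositive)
    (hT' : IsAAdjointPair A T T') (hS' : IsAAdjointPair A (T'.comp T) S') :
    dwA A T ^ 2 ≤ opNormA A (T'.comp T + S'.comp (T'.comp T)) := by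
  set R := T'.comp T + S'.comp (T'.comp T)
  have hR : IsAAdjointPair A R (S' + S'.comp (T'.comp T)) := hS'.add ((hS'.symm hA).comp hS')
  refine dwA_sq_le (opNormA_nonneg R) fun x hx => ?_
  have hnum : ‖innA A (T x) x‖ ≤ normA A (T x) := by simpa [hx] using norm_innA_le hA (T x) x
  have hsq : normA A (T x) ^ 2 ≤ normA A ((T'.comp T) x) := hT'.normA_sq_le hA hx
  have hre : (innA A x (R x)).re = normA A (T x) ^ 2 + normA A ((T'.comp T) x) ^ 2 := by
    rw [show R x = T' (T x) + S' ((T'.comp T) x) from rfl, innA_add_right,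
      hT'.innA_apply_self hA, hS'.innA_apply_self hA, Complex.add_re, Complex.ofReal_re,
      Complex.ofReal_re]
  calc ‖innA A (T x) x‖ ^ 2 + normA A (T x) ^ 4
      ≤ normA A (T x) ^ 2 + normA A ((T'.comp T) x) ^ 2 := by
        rw [show normA A (T x) ^ 4 = (normA A (T x) ^ 2) ^ 2 by ring]
        gcongr
    _ = (innA A x (R x)).re := hre.symm
    _ ≤ normA A (R x) := re_innA_le_normA hA hx _
    _ ≤ opNormA A R := hR.normA_le_opNormA hA hx
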